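/- The function ψ is a solution of the homogeneous ordinary differential equation associated with the resolvent of the Ornstein–Uhlenbeck generator: for every x ∈ ℝ, (σ²/2)·ψ''(x) + k(μ − x)·ψ'(x) − ρ·ψ(x) = 0. -/

import Mathlib

/-!
Writing `c = (x - μ)√(2k)/σ` and `ν = ρ/k`, we have `Γ(ν) ψ(x) = I_{ν-1}(c)` where
`I_p(c) = ∫₀^∞ t^p exp(-t²/2 + ct) dt`. Differentiating in `c` raises `p` by one, and integrating
`d/dt (t^ν exp(-t²/2 + ct))` over `(0, ∞)` gives the recurrence `I_{ν+1} = c I_ν + ν I_{ν-1}`.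
Since `(σ²/2)(√(2k)/σ)² = k` and `kν = ρ`, the recurrence is exactly the differential equation.
-/

noncomputable section

open MeasureTheory

/-- The increasing fundamental solution `ψ` of the Ornstein–Uhlenbeck resolvent equation:
`ψ(x) = (1/Γ(ρ/k)) ∫₀^∞ t^{ρ/k − 1} exp(−t²/2 + ((x − μ)√(2k)/σ) t) dt`. -/
def psi (ρ k σ μ : ℝ) (x : ℝ) : ℝ :=
  (1 / Real.Gamma (ρ / k)) *
    ∫ t in Set.Ioi (0 : ℝ),
      t ^ (ρ / k - 1) * Real.exp (-t ^ 2 / 2 + ((x - μ) * Real.sqrt (2 * k) / σ) * t)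

open Real Set Filter

def tiltedGaussMoment (p c : ℝ) : ℝ :=
  ∫ t in Ioi (0 : ℝ), t ^ p * exp (-t ^ 2 / 2 + c * t)

lemma exp_neg_sq_div_two_add_mul_le (c t : ℝ) :
    exp (-t ^ 2 / 2 + c * t) ≤ exp (c ^ 2) * exp (-(1 / 4) * t ^ 2) := by
  rw [← exp_add]
  exact exp_le_exp.2 (by nlinarith [sq_nonneg (c - t / 2)])

lemma integrableOn_rpow_mul_exp_neg_sq_div_two_add_mul {p : ℝ} (hp : -1 < p) (c : ℝ) :
    IntegrableOn (fun t : ℝ => t ^ p * exp (-t ^ 2 / 2 + c * t)) (Ioi 0) := by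
  refine (((integrableOn_rpow_mul_exp_neg_mul_sq (by norm_num : (0 : ℝ) < 1 / 4) hp).const_mul
    (exp (c ^ 2))).mono' (by fun_prop) ?_)
  filter_upwards [ae_restrict_mem measurableSet_Ioi] with t (ht : 0 < t)
  rw [norm_of_nonneg (by positivity)]
  calc t ^ p * exp (-t ^ 2 / 2 + c * t)
      ≤ t ^ p * (exp (c ^ 2) * exp (-(1 / 4) * t ^ 2)) :=
        mul_le_mul_of_nonneg_left (exp_neg_sq_div_two_add_mul_le c t) (by positivity)
    _ = exp (c ^ 2) * (t ^ p * exp (-(1 / 4) * t ^ 2)) := by ring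

lemma hasDerivAt_tiltedGaussMoment {p : ℝ} (hp : -1 < p) (c : ℝ) :
    HasDerivAt (tiltedGaussMoment p) (tiltedGaussMoment (p + 1) c) c := by
  have hbound : ∀ᵐ t ∂(volume.restrict (Ioi 0)), ∀ x ∈ Metric.ball c 1,
      ‖t ^ (p + 1) * exp (-t ^ 2 / 2 + x * t)‖ ≤
        t ^ (p + 1) * exp (-t ^ 2 / 2 + (|c| + 1) * t) := by
    filter_upwards [ae_restrict_mem measurableSet_Ioi] with t (ht : 0 < t) x hx
    have hx : x ≤ |c| + 1 := by
      rw [Metric.mem_ball, dist_eq] at hx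
      linarith [abs_sub_abs_le_abs_sub x c, le_abs_self x]
    rw [norm_of_nonneg (by positivity)]
    gcongr
  have hderiv : ∀ᵐ t ∂(volume.restrict (Ioi 0)), ∀ x ∈ Metric.ball c 1,
      HasDerivAt (fun x => t ^ p * exp (-t ^ 2 / 2 + x * t))
        (t ^ (p + 1) * exp (-t ^ 2 / 2 + x * t)) x := by
    filter_upwards [ae_restrict_mem measurableSet_Ioi] with t (ht : 0 < t) x _
    refine ((((hasDerivAt_id x).mul_const t).const_add (-t ^ 2 / 2)).exp.const_mul
      (t ^ p)).congr_deriv ?_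
    rw [rpow_add_one ht.ne', id, one_mul]
    ring
  exact (hasDerivAt_integral_of_dominated_loc_of_deriv_le (μ := volume.restrict (Ioi 0))
    (F := fun x t => t ^ p * exp (-t ^ 2 / 2 + x * t)) (Metric.ball_mem_nhds c one_pos)
    (.of_forall fun x => by fun_prop) (integrableOn_rpow_mul_exp_neg_sq_div_two_add_mul hp c)
    (by fun_prop) hbound
    (integrableOn_rpow_mul_exp_neg_sq_div_two_add_mul (by linarith) _) hderiv).2

lemma tiltedGaussMoment_add_one {ν : ℝ} (hν : 0 < ν) (c : ℝ) :
    tiltedGaussMoment (ν + 1) c =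
      c * tiltedGaussMoment ν c + ν * tiltedGaussMoment (ν - 1) c := by
  set g : ℝ → ℝ → ℝ := fun p t => t ^ p * exp (-t ^ 2 / 2 + c * t)
  have hint : ∀ p, -1 < p → IntegrableOn (g p) (Ioi 0) :=
    fun p hp => integrableOn_rpow_mul_exp_neg_sq_div_two_add_mul hp c
  have hint₁ := (hint (ν - 1) (by linarith)).const_mul ν
  have hint₂ := (hint ν (by linarith)).const_mul c
  have hint₁₂ : IntegrableOn (fun t => ν * g (ν - 1) t + c * g ν t) (Ioi 0) := hint₁.add hint₂
  have hint₃ := hint (ν + 1) (by linarith)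
  have hderiv : ∀ t ∈ Ioi (0 : ℝ),
      HasDerivAt (g ν) (ν * g (ν - 1) t + c * g ν t - g (ν + 1) t) t := by
    intro t (ht : 0 < t)
    have hexp : HasDerivAt (fun t : ℝ => -t ^ 2 / 2 + c * t) (-t + c) t := by
      refine (((hasDerivAt_pow 2 t).neg.div_const 2).add
        ((hasDerivAt_id t).const_mul c)).congr_deriv ?_
      ring
    refine ((hasDerivAt_rpow_const (p := ν) (Or.inl ht.ne')).mul hexp.exp).congr_deriv ?_
    simp only [g, rpow_add_one ht.ne']
    ring
  have hcont : ContinuousWithinAt (g ν) (Ici 0) 0 :=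
    ((continuousAt_rpow_const 0 ν (Or.inr hν.le)).mul (by fun_prop)).continuousWithinAt
  have hftc := integral_Ioi_of_hasDerivAt_of_tendsto hcont hderiv (hint₁₂.sub hint₃)
    (tendsto_zero_of_hasDerivAt_of_integrableOn_Ioi hderiv (hint₁₂.sub hint₃)
      (hint ν (by linarith)))
  rw [integral_sub hint₁₂ hint₃, integral_add hint₁ hint₂, integral_const_mul,
    integral_const_mul] at hftc
  simp only [g, zero_rpow hν.ne', zero_mul, sub_zero] at hftc
  unfold tiltedGaussMoment
  linarith

lemma hasDerivAt_tiltedGaussMoment_comp {p : ℝ} (hp : -1 < p) (μ a b x : ℝ) :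
    HasDerivAt (fun y => tiltedGaussMoment p ((y - μ) * a / b))
      (tiltedGaussMoment (p + 1) ((x - μ) * a / b) * (a / b)) x := by
  refine (hasDerivAt_tiltedGaussMoment hp _).comp x ?_
  simpa using (((hasDerivAt_id x).sub_const μ).mul_const a).div_const b

lemma psi_eq_tiltedGaussMoment (ρ k σ μ x : ℝ) :
    psi ρ k σ μ x =
      1 / Gamma (ρ / k) * tiltedGaussMoment (ρ / k - 1) ((x - μ) * √(2 * k) / σ) :=
  rfl

lemma deriv_psi {ρ k : ℝ} (hν : 0 < ρ / k) (σ μ : ℝ) :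
    deriv (psi ρ k σ μ) = fun x => 1 / Gamma (ρ / k) *
      (tiltedGaussMoment (ρ / k) ((x - μ) * √(2 * k) / σ) * (√(2 * k) / σ)) := by
  funext x
  have h := (hasDerivAt_tiltedGaussMoment_comp (p := ρ / k - 1) (by linarith) μ √(2 * k) σ
    x).const_mul (1 / Gamma (ρ / k))
  rw [sub_add_cancel] at h
  exact h.deriv

lemma deriv_deriv_psi {ρ k : ℝ} (hν : 0 < ρ / k) (σ μ x : ℝ) :
    deriv (deriv (psi ρ k σ μ)) x = 1 / Gamma (ρ / k) *
      (tiltedGaussMoment (ρ / k + 1) ((x - μ) * √(2 * k) / σ) * (√(2 * k) / σ) *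
        (√(2 * k) / σ)) := by
  rw [deriv_psi hν]
  exact (((hasDerivAt_tiltedGaussMoment_comp (by linarith) μ √(2 * k) σ x).mul_const
    (√(2 * k) / σ)).const_mul _).deriv

/-- `ψ` solves the homogeneous ODE associated with the resolvent of the
Ornstein–Uhlenbeck generator: `(σ²/2)ψ'' + k(μ − x)ψ' − ρψ = 0`. -/
theorem stmt9 (ρ k σ μ : ℝ) (hρ : 0 < ρ) (hk : 0 < k) (hσ : 0 < σ) (x : ℝ) :
    σ ^ 2 / 2 * deriv (deriv (psi ρ k σ μ)) x + k * (μ - x) * deriv (psi ρ k σ μ) x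
      - ρ * psi ρ k σ μ x = 0 := by
  have hscale : σ ^ 2 / 2 * (√(2 * k) / σ) ^ 2 = k := by
    rw [div_pow, sq_sqrt (by positivity)]
    field_simp
  have hν : k * (ρ / k) = ρ := mul_div_cancel₀ ρ hk.ne'
  have hν_pos : 0 < ρ / k := div_pos hρ hk
  rw [deriv_deriv_psi hν_pos, deriv_psi hν_pos, psi_eq_tiltedGaussMoment,
    tiltedGaussMoment_add_one hν_pos]
  set c := (x - μ) * √(2 * k) / σ
  linear_combination 1 / Gamma (ρ / k) * (c * tiltedGaussMoment (ρ / k) c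
    + ρ / k * tiltedGaussMoment (ρ / k - 1) c) * hscale
    + 1 / Gamma (ρ / k) * tiltedGaussMoment (ρ / k - 1) c * hν
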